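/- (SOPE_n identity, infinite horizon.) Under the support assumption, for any finite n ≥ 0, J(π_e) = E_{τ∼p_{π_b}}[Σ_{t=1}^{n} γ^{t−1} ρ_{1:t} R_t + Σ_{t=n+1}^{∞} γ^{t−1} (d^{π_e}(S_{t−n},A_{t−n})/d^{π_b}(S_{t−n},A_{t−n})) ρ_{t−n+1:t} R_t], where both series converge absolutely in expectation and all ratios are well defined p_{π_b}-almost surely. -/

import Mathlib

open Finset
set_option linter.unusedSectionVars false
set_option linter.unusedVariables false

variable {S A : Type*} [Fintype S] [Fintype A] [DecidableEq S] [DecidableEq A]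
  [Inhabited S] [Inhabited A]

/-- Weight contributed by the `t`-th step of trajectory `τ` under initial
distribution `d1`, transition kernel `T` and policy `π` (`π s a = π(a|s)`,
`T s a s' = T(s'|s,a)`). -/
noncomputable def stepW (d1 : S → ℝ) (T : S → A → S → ℝ) (π : S → A → ℝ)
    (τ : ℕ → S × A) : ℕ → ℝ
  | 0 => d1 (τ 0).1 * π (τ 0).1 (τ 0).2
  | t + 1 => T (τ t).1 (τ t).2 (τ (t + 1)).1 * π (τ (t + 1)).1 (τ (t + 1)).2

/-- Probability under `p_π` of the first `n` steps (times `0, …, n-1`) of `τ`. -/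
noncomputable def preP (d1 : S → ℝ) (T : S → A → S → ℝ) (π : S → A → ℝ)
    (n : ℕ) (τ : ℕ → S × A) : ℝ :=
  ∏ t ∈ range n, stepW d1 T π τ t

/-- Extension of a length-`n` prefix to an infinite trajectory. -/
def extTraj {n : ℕ} (σ : Fin n → S × A) : ℕ → S × A :=
  fun t => if h : t < n then σ ⟨t, h⟩ else default

/-- Expectation under `p_π` of a function depending only on the first `n` steps
of the trajectory. -/
noncomputable def expVal (d1 : S → ℝ) (T : S → A → S → ℝ) (π : S → A → ℝ)
    (n : ℕ) (f : (ℕ → S × A) → ℝ) : ℝ :=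
  ∑ σ : Fin n → S × A, preP d1 T π n (extTraj σ) * f (extTraj σ)

/-- `d_t^π(s,a)`, the time-`t` state-action distribution (time is 0-indexed,
so `t = 0` is the paper's time `1`). -/
noncomputable def dSA (d1 : S → ℝ) (T : S → A → S → ℝ) (π : S → A → ℝ)
    (t : ℕ) (s : S) (a : A) : ℝ :=
  expVal d1 T π (t + 1) (fun τ => if τ t = (s, a) then 1 else 0)

/-- Single-step likelihood ratio `ρ_t = π_e(A_t|S_t)/π_b(A_t|S_t)`
(0-indexed time). -/
noncomputable def rho (πb πe : S → A → ℝ) (τ : ℕ → S × A) (t : ℕ) : ℝ :=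
  πe (τ t).1 (τ t).2 / πb (τ t).1 (τ t).2

/-- Conditional expectation under `p_π` given `(S_t, A_t) = (s, a)`, for a
function of the first `n` steps. -/
noncomputable def condExpSA (d1 : S → ℝ) (T : S → A → S → ℝ) (π : S → A → ℝ)
    (n t : ℕ) (s : S) (a : A) (f : (ℕ → S × A) → ℝ) : ℝ :=
  expVal d1 T π n (fun τ => if τ t = (s, a) then f τ else 0) / dSA d1 T π t s a

/-- Averaged state-action distribution `d_{1:Th}^π` over the first `Th` steps
with discount `γ`. -/
noncomputable def dAvg (d1 : S → ℝ) (T : S → A → S → ℝ) (π : S → A → ℝ)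
    (γ : ℝ) (Th : ℕ) (s : S) (a : A) : ℝ :=
  (∑ t ∈ range Th, γ ^ t * dSA d1 T π t s a) / (∑ t ∈ range Th, γ ^ t)

/-- Discounted average state-action occupancy `d^π` (infinite horizon),
`d^π(s,a) = (1-γ) Σ_{t≥1} γ^{t-1} d_t^π(s,a)`. -/
noncomputable def dInf (d1 : S → ℝ) (T : S → A → S → ℝ) (π : S → A → ℝ)
    (γ : ℝ) (s : S) (a : A) : ℝ :=
  (1 - γ) * ∑' t : ℕ, γ ^ t * dSA d1 T π t s a

/-- Infinite-horizon value `J(π) = E_{p_π}[Σ_{t≥1} γ^{t-1} R_t]`. -/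
noncomputable def Jinf (d1 : S → ℝ) (T : S → A → S → ℝ) (π : S → A → ℝ)
    (r : S → A → ℝ) (γ : ℝ) : ℝ :=
  ∑' t : ℕ, γ ^ t * expVal d1 T π (t + 1) (fun τ => r (τ t).1 (τ t).2)

/-- Doubly-robust weight `w(m, n)` of the paper (`m` is the paper's 1-indexed
time, with `w(0, n) = 1`). -/
noncomputable def wDR (d1 : S → ℝ) (T : S → A → S → ℝ) (πb πe : S → A → ℝ)
    (γ : ℝ) (n : ℕ) (τ : ℕ → S × A) (m : ℕ) : ℝ :=
  if m = 0 then 1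
  else if m ≤ n then ∏ j ∈ range m, rho πb πe τ j
  else (dInf d1 T πe γ (τ (m - n - 1)).1 (τ (m - n - 1)).2 /
        dInf d1 T πb γ (τ (m - n - 1)).1 (τ (m - n - 1)).2) *
      ∏ j ∈ Icc (m - n) (m - 1), rho πb πe τ j

-- AUX START
def snocE (m : ℕ) : ((Fin m → S × A) × (S × A)) ≃ (Fin (m + 1) → S × A) where
  toFun x := Fin.snoc x.1 x.2
  invFun f := (Fin.init f, f (Fin.last m))
  left_inv x := by simp [Fin.init_snoc, Fin.snoc_last]
  right_inv f := by simp [Fin.snoc_init_self]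

lemma extTraj_snoc_lt {m : ℕ} (σ : Fin m → S × A) (p : S × A) {t : ℕ} (h : t < m) :
    extTraj (Fin.snoc σ p) t = extTraj σ t := by
  have h' : t < m + 1 := Nat.lt_succ_of_lt h
  simp only [extTraj, dif_pos h, dif_pos h']
  have he : (⟨t, h'⟩ : Fin (m + 1)) = Fin.castSucc ⟨t, h⟩ := rfl
  rw [he, Fin.snoc_castSucc]

lemma extTraj_snoc_last {m : ℕ} (σ : Fin m → S × A) (p : S × A) :
    extTraj (Fin.snoc σ p) m = p := by
  simp only [extTraj, dif_pos (Nat.lt_succ_self m)]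
  have he : (⟨m, Nat.lt_succ_self m⟩ : Fin (m + 1)) = Fin.last m := rfl
  rw [he, Fin.snoc_last]

lemma stepW_congr (d1 : S → ℝ) (T : S → A → S → ℝ) (π : S → A → ℝ)
    {τ τ' : ℕ → S × A} {t : ℕ} (h : ∀ j, j ≤ t → τ j = τ' j) :
    stepW d1 T π τ t = stepW d1 T π τ' t := by
  cases t with
  | zero => simp only [stepW, h 0 le_rfl]
  | succ t => simp only [stepW, h t (Nat.le_succ t), h (t + 1) le_rfl]

lemma preP_snoc (d1 : S → ℝ) (T : S → A → S → ℝ) (π : S → A → ℝ)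
    {m : ℕ} (σ : Fin m → S × A) (p : S × A) :
    preP d1 T π (m + 1) (extTraj (Fin.snoc σ p)) =
      preP d1 T π m (extTraj σ) * stepW d1 T π (extTraj (Fin.snoc σ p)) m := by
  unfold preP
  rw [Finset.prod_range_succ]
  congr 1
  refine Finset.prod_congr rfl fun t ht => ?_
  rw [Finset.mem_range] at ht
  exact stepW_congr d1 T π fun j hj => extTraj_snoc_lt σ p (lt_of_le_of_lt hj ht)

lemma expVal_split (d1 : S → ℝ) (T : S → A → S → ℝ) (π : S → A → ℝ)
    (m : ℕ) (f : (ℕ → S × A) → ℝ) :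
    expVal d1 T π (m + 1) f =
      ∑ σ : Fin m → S × A, preP d1 T π m (extTraj σ) *
        ∑ p : S × A, stepW d1 T π (extTraj (Fin.snoc σ p)) m * f (extTraj (Fin.snoc σ p)) := by
  unfold expVal
  rw [← Equiv.sum_comp (snocE (S := S) (A := A) m)
    (fun σ' => preP d1 T π (m + 1) (extTraj σ') * f (extTraj σ')), Fintype.sum_prod_type]
  refine Finset.sum_congr rfl fun σ _ => ?_
  rw [Finset.mul_sum]
  refine Finset.sum_congr rfl fun p _ => ?_
  show preP d1 T π (m + 1) (extTraj (Fin.snoc σ p)) * f (extTraj (Fin.snoc σ p)) = _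
  rw [preP_snoc, mul_assoc]

lemma expVal_congr (d1 : S → ℝ) (T : S → A → S → ℝ) (π : S → A → ℝ)
    {m : ℕ} {f g : (ℕ → S × A) → ℝ} (h : ∀ τ, f τ = g τ) :
    expVal d1 T π m f = expVal d1 T π m g := by
  unfold expVal; exact Finset.sum_congr rfl fun σ _ => by rw [h]

lemma stepW_sum (d1 : S → ℝ) (T : S → A → S → ℝ) (π : S → A → ℝ)
    (hd1sum : ∑ s, d1 s = 1) (hTsum : ∀ s a, ∑ s', T s a s' = 1)
    (hπsum : ∀ s, ∑ a, π s a = 1) {m : ℕ} (σ : Fin m → S × A) :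
    ∑ p : S × A, stepW d1 T π (extTraj (Fin.snoc σ p)) m = 1 := by
  cases m with
  | zero =>
    have h : ∀ p : S × A, stepW d1 T π (extTraj (Fin.snoc σ p)) 0 = d1 p.1 * π p.1 p.2 := by
      intro p
      show d1 (extTraj (Fin.snoc σ p) 0).1 * π (extTraj (Fin.snoc σ p) 0).1 (extTraj (Fin.snoc σ p) 0).2 = _
      rw [extTraj_snoc_last]
    rw [Finset.sum_congr rfl fun p _ => h p, Fintype.sum_prod_type]
    simp only [← Finset.mul_sum, hπsum, mul_one]
    exact hd1sum
  | succ j =>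
    have h : ∀ p : S × A, stepW d1 T π (extTraj (Fin.snoc σ p)) (j + 1)
        = T (extTraj σ j).1 (extTraj σ j).2 p.1 * π p.1 p.2 := by
      intro p
      show T (extTraj (Fin.snoc σ p) j).1 (extTraj (Fin.snoc σ p) j).2 (extTraj (Fin.snoc σ p) (j + 1)).1
          * π (extTraj (Fin.snoc σ p) (j + 1)).1 (extTraj (Fin.snoc σ p) (j + 1)).2 = _
      rw [extTraj_snoc_lt σ p (Nat.lt_succ_self j), extTraj_snoc_last]
    rw [Finset.sum_congr rfl fun p _ => h p, Fintype.sum_prod_type]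
    simp only [← Finset.mul_sum, hπsum, mul_one]
    exact hTsum _ _

lemma expVal_one (d1 : S → ℝ) (T : S → A → S → ℝ) (π : S → A → ℝ)
    (hd1sum : ∑ s, d1 s = 1) (hTsum : ∀ s a, ∑ s', T s a s' = 1)
    (hπsum : ∀ s, ∑ a, π s a = 1) : ∀ m : ℕ, expVal d1 T π m (fun _ => 1) = 1
  | 0 => by simp [expVal, preP]
  | (m + 1) => by
    rw [expVal_split]
    have h : ∀ σ : Fin m → S × A,
        (∑ p : S × A, stepW d1 T π (extTraj (Fin.snoc σ p)) m * 1) = 1 := fun σ => by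
      simp only [mul_one]; exact stepW_sum d1 T π hd1sum hTsum hπsum σ
    calc ∑ σ : Fin m → S × A, preP d1 T π m (extTraj σ) *
          ∑ p : S × A, stepW d1 T π (extTraj (Fin.snoc σ p)) m * 1
        = ∑ σ : Fin m → S × A, preP d1 T π m (extTraj σ) * 1 :=
          Finset.sum_congr rfl fun σ _ => by rw [h σ]
      _ = 1 := expVal_one d1 T π hd1sum hTsum hπsum m

-- AUX PART 2
noncomputable def Op (T : S → A → S → ℝ) (π : S → A → ℝ) (g : S → A → ℝ)
    (s : S) (a : A) : ℝ :=
  ∑ p : S × A, T s a p.1 * π p.1 p.2 * g p.1 p.2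

noncomputable def Vit (T : S → A → S → ℝ) (π : S → A → ℝ) : ℕ → (S → A → ℝ) → S → A → ℝ
  | 0, g => g
  | n + 1, g => Vit T π n (Op T π g)

lemma stepW_nonneg (d1 : S → ℝ) (T : S → A → S → ℝ) (π : S → A → ℝ)
    (hd1 : ∀ s, 0 ≤ d1 s) (hT : ∀ s a s', 0 ≤ T s a s') (hπ : ∀ s a, 0 ≤ π s a)
    (τ : ℕ → S × A) (t : ℕ) : 0 ≤ stepW d1 T π τ t := by
  cases t with
  | zero => exact mul_nonneg (hd1 _) (hπ _ _)
  | succ t => exact mul_nonneg (hT _ _ _) (hπ _ _)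

lemma preP_nonneg (d1 : S → ℝ) (T : S → A → S → ℝ) (π : S → A → ℝ)
    (hd1 : ∀ s, 0 ≤ d1 s) (hT : ∀ s a s', 0 ≤ T s a s') (hπ : ∀ s a, 0 ≤ π s a)
    (m : ℕ) (τ : ℕ → S × A) : 0 ≤ preP d1 T π m τ :=
  Finset.prod_nonneg fun t _ => stepW_nonneg d1 T π hd1 hT hπ τ t

lemma stepW_mul_rho (d1 : S → ℝ) (T : S → A → S → ℝ) (πb πe : S → A → ℝ)
    (hπe : ∀ s a, 0 ≤ πe s a) (hsupp : ∀ s a, 0 < πe s a → 0 < πb s a)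
    (τ : ℕ → S × A) (t : ℕ) :
    stepW d1 T πb τ t * rho πb πe τ t = stepW d1 T πe τ t := by
  have key : ∀ (base : ℝ) (s : S) (a : A), base * πb s a * (πe s a / πb s a) = base * πe s a := by
    intro base s a
    by_cases h : πb s a = 0
    · have he : πe s a = 0 := by
        by_contra hc
        exact (hsupp s a (lt_of_le_of_ne (hπe s a) (Ne.symm hc))).ne' h
      rw [h, he]; simp
    · rw [mul_assoc]
      congr 1
      rw [mul_comm, div_mul_cancel₀ _ h]
  cases t with
  | zero => exact key _ _ _
  | succ t => exact key _ _ _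

lemma peel_plain (d1 : S → ℝ) (T : S → A → S → ℝ) (π : S → A → ℝ)
    (m : ℕ) (F : (ℕ → S × A) → ℝ) (g : S → A → ℝ)
    (hF : ∀ τ τ' : ℕ → S × A, (∀ j, j ≤ m → τ j = τ' j) → F τ = F τ') :
    expVal d1 T π (m + 2) (fun τ => F τ * g (τ (m + 1)).1 (τ (m + 1)).2)
      = expVal d1 T π (m + 1) (fun τ => F τ * Op T π g (τ m).1 (τ m).2) := by
  rw [expVal_split d1 T π (m + 1)]
  unfold expVal
  refine Finset.sum_congr rfl fun σ _ => ?_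
  congr 1
  have hstep : ∀ p : S × A, stepW d1 T π (extTraj (Fin.snoc σ p)) (m + 1)
      = T (extTraj σ m).1 (extTraj σ m).2 p.1 * π p.1 p.2 := by
    intro p
    show T (extTraj (Fin.snoc σ p) m).1 (extTraj (Fin.snoc σ p) m).2 (extTraj (Fin.snoc σ p) (m + 1)).1
        * π (extTraj (Fin.snoc σ p) (m + 1)).1 (extTraj (Fin.snoc σ p) (m + 1)).2 = _
    rw [extTraj_snoc_lt σ p (Nat.lt_succ_self m), extTraj_snoc_last]
  have hFp : ∀ p : S × A, F (extTraj (Fin.snoc σ p)) = F (extTraj σ) := fun p =>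
    hF _ _ fun j hj => extTraj_snoc_lt σ p (Nat.lt_succ_of_le hj)
  have hlast : ∀ p : S × A, extTraj (Fin.snoc σ p) (m + 1) = p := fun p => extTraj_snoc_last σ p
  simp only [Op, Finset.mul_sum]
  refine Finset.sum_congr rfl fun p _ => ?_
  rw [hstep p, hFp p, hlast p]
  ring

lemma peel_IS (d1 : S → ℝ) (T : S → A → S → ℝ) (πb πe : S → A → ℝ)
    (hπe : ∀ s a, 0 ≤ πe s a) (hsupp : ∀ s a, 0 < πe s a → 0 < πb s a)
    (m : ℕ) (F : (ℕ → S × A) → ℝ) (g : S → A → ℝ)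
    (hF : ∀ τ τ' : ℕ → S × A, (∀ j, j ≤ m → τ j = τ' j) → F τ = F τ') :
    expVal d1 T πb (m + 2) (fun τ => F τ * (rho πb πe τ (m + 1) * g (τ (m + 1)).1 (τ (m + 1)).2))
      = expVal d1 T πb (m + 1) (fun τ => F τ * Op T πe g (τ m).1 (τ m).2) := by
  rw [expVal_split d1 T πb (m + 1)]
  unfold expVal
  refine Finset.sum_congr rfl fun σ _ => ?_
  congr 1
  have hstep : ∀ p : S × A, stepW d1 T πe (extTraj (Fin.snoc σ p)) (m + 1)
      = T (extTraj σ m).1 (extTraj σ m).2 p.1 * πe p.1 p.2 := by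
    intro p
    show T (extTraj (Fin.snoc σ p) m).1 (extTraj (Fin.snoc σ p) m).2 (extTraj (Fin.snoc σ p) (m + 1)).1
        * πe (extTraj (Fin.snoc σ p) (m + 1)).1 (extTraj (Fin.snoc σ p) (m + 1)).2 = _
    rw [extTraj_snoc_lt σ p (Nat.lt_succ_self m), extTraj_snoc_last]
  have hFp : ∀ p : S × A, F (extTraj (Fin.snoc σ p)) = F (extTraj σ) := fun p =>
    hF _ _ fun j hj => extTraj_snoc_lt σ p (Nat.lt_succ_of_le hj)
  have hlast : ∀ p : S × A, extTraj (Fin.snoc σ p) (m + 1) = p := fun p => extTraj_snoc_last σ p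
  simp only [Op, Finset.mul_sum]
  refine Finset.sum_congr rfl fun p _ => ?_
  calc stepW d1 T πb (extTraj (Fin.snoc σ p)) (m + 1) *
        (F (extTraj (Fin.snoc σ p)) *
          (rho πb πe (extTraj (Fin.snoc σ p)) (m + 1) *
            g (extTraj (Fin.snoc σ p) (m + 1)).1 (extTraj (Fin.snoc σ p) (m + 1)).2))
      = F (extTraj (Fin.snoc σ p)) *
          ((stepW d1 T πb (extTraj (Fin.snoc σ p)) (m + 1) *
            rho πb πe (extTraj (Fin.snoc σ p)) (m + 1)) *
            g (extTraj (Fin.snoc σ p) (m + 1)).1 (extTraj (Fin.snoc σ p) (m + 1)).2) := by ring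
    _ = _ := by
        rw [stepW_mul_rho d1 T πb πe hπe hsupp, hstep p, hFp p, hlast p]

-- AUX PART 3
lemma CIter (d1 : S → ℝ) (T : S → A → S → ℝ) (πb πe : S → A → ℝ)
    (hπe : ∀ s a, 0 ≤ πe s a) (hsupp : ∀ s a, 0 < πe s a → 0 < πb s a)
    (n : ℕ) :
    ∀ (k : ℕ) (F : (ℕ → S × A) → ℝ),
      (∀ τ τ' : ℕ → S × A, (∀ j, j ≤ k → τ j = τ' j) → F τ = F τ') →
      ∀ g : S → A → ℝ,
      expVal d1 T πb (k + n + 1)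
          (fun τ => F τ * (∏ j ∈ Icc (k + 1) (k + n), rho πb πe τ j) * g (τ (k + n)).1 (τ (k + n)).2)
        = expVal d1 T πb (k + 1) (fun τ => F τ * Vit T πe n g (τ k).1 (τ k).2) := by
  induction n with
  | zero =>
    intro k F hF g
    refine expVal_congr d1 T πb fun τ => ?_
    rw [show Icc (k + 1) (k + 0) = ∅ from Finset.Icc_eq_empty (by omega)]
    simp [Vit]
  | succ n ih =>
    intro k F hF g
    have h1 := peel_IS d1 T πb πe hπe hsupp (k + n)
        (fun τ => F τ * ∏ j ∈ Icc (k + 1) (k + n), rho πb πe τ j) g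
        (fun τ τ' h => by
          beta_reduce
          rw [hF τ τ' (fun j hj => h j (le_trans hj (by omega)))]
          congr 1
          refine Finset.prod_congr rfl fun j hj => ?_
          rw [Finset.mem_Icc] at hj
          unfold rho
          rw [h j (by omega)])
    have h2 : expVal d1 T πb (k + (n + 1) + 1)
          (fun τ => F τ * (∏ j ∈ Icc (k + 1) (k + (n + 1)), rho πb πe τ j)
            * g (τ (k + (n + 1))).1 (τ (k + (n + 1))).2)
        = expVal d1 T πb (k + n + 1)
          (fun τ => F τ * (∏ j ∈ Icc (k + 1) (k + n), rho πb πe τ j)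
            * Op T πe g (τ (k + n)).1 (τ (k + n)).2) := by
      refine Eq.trans (expVal_congr d1 T πb fun τ => ?_)
        (Eq.trans h1 (expVal_congr d1 T πb fun τ => by simp only []))
      have hIcc : (∏ j ∈ Icc (k + 1) (k + n + 1), rho πb πe τ j)
          = (∏ j ∈ Icc (k + 1) (k + n), rho πb πe τ j) * rho πb πe τ (k + n + 1) :=
        Finset.prod_Icc_succ_top (by omega) _
      simp only [← Nat.add_assoc]
      rw [hIcc]
      ring
    rw [h2]
    exact ih k F hF (Op T πe g)

lemma DIter (d1 : S → ℝ) (T : S → A → S → ℝ) (π : S → A → ℝ) (n : ℕ) :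
    ∀ (k : ℕ) (g : S → A → ℝ),
      expVal d1 T π (k + n + 1) (fun τ => g (τ (k + n)).1 (τ (k + n)).2)
        = expVal d1 T π (k + 1) (fun τ => Vit T π n g (τ k).1 (τ k).2) := by
  induction n with
  | zero => intro k g; rfl
  | succ n ih =>
    intro k g
    have h1 := peel_plain d1 T π (k + n) (fun _ => (1 : ℝ)) g (fun _ _ _ => rfl)
    have h2 : expVal d1 T π (k + (n + 1) + 1)
          (fun τ => g (τ (k + (n + 1))).1 (τ (k + (n + 1))).2)
        = expVal d1 T π (k + n + 1)
          (fun τ => Op T π g (τ (k + n)).1 (τ (k + n)).2) :=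
      Eq.trans (expVal_congr d1 T π fun τ => by simp only [← Nat.add_assoc]; ring)
        (Eq.trans h1 (expVal_congr d1 T π fun τ => by beta_reduce; ring))
    rw [h2]
    exact ih k (Op T π g)

lemma expVal_eval (d1 : S → ℝ) (T : S → A → S → ℝ) (π : S → A → ℝ)
    (k : ℕ) (G : S × A → ℝ) :
    expVal d1 T π (k + 1) (fun τ => G (τ k))
      = ∑ q : S × A, dSA d1 T π k q.1 q.2 * G q := by
  simp only [dSA, expVal, Finset.sum_mul]
  rw [Finset.sum_comm]
  refine Finset.sum_congr rfl fun σ _ => ?_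
  simp only [mul_ite, mul_one, mul_zero, ite_mul, zero_mul]
  rw [Finset.sum_ite_eq, if_pos (Finset.mem_univ _)]

lemma IS_full (d1 : S → ℝ) (T : S → A → S → ℝ) (πb πe : S → A → ℝ)
    (hπe : ∀ s a, 0 ≤ πe s a) (hsupp : ∀ s a, 0 < πe s a → 0 < πb s a)
    (m : ℕ) (f : (ℕ → S × A) → ℝ) :
    expVal d1 T πb m (fun τ => (∏ j ∈ range m, rho πb πe τ j) * f τ)
      = expVal d1 T πe m f := by
  unfold expVal
  refine Finset.sum_congr rfl fun σ _ => ?_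
  rw [← mul_assoc]
  congr 1
  unfold preP
  rw [← Finset.prod_mul_distrib]
  exact Finset.prod_congr rfl fun t _ => stepW_mul_rho d1 T πb πe hπe hsupp _ t

-- AUX PART 4
lemma pos_pair {x y : ℝ} (hx : 0 ≤ x) (hy : 0 ≤ y) (h : 0 < x * y) : 0 < x ∧ 0 < y := by
  have hx' : x ≠ 0 := fun h0 => by simp [h0] at h
  have hy' : y ≠ 0 := fun h0 => by simp [h0] at h
  exact ⟨hx.lt_of_ne (Ne.symm hx'), hy.lt_of_ne (Ne.symm hy')⟩

lemma stepW_pos (d1 : S → ℝ) (T : S → A → S → ℝ) (πb πe : S → A → ℝ)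
    (hd1 : ∀ s, 0 ≤ d1 s) (hT : ∀ s a s', 0 ≤ T s a s') (hπe : ∀ s a, 0 ≤ πe s a)
    (hsupp : ∀ s a, 0 < πe s a → 0 < πb s a)
    {τ : ℕ → S × A} {t : ℕ} (h : 0 < stepW d1 T πe τ t) : 0 < stepW d1 T πb τ t := by
  cases t with
  | zero =>
    obtain ⟨h1, h2⟩ := pos_pair (hd1 _) (hπe _ _) h
    exact mul_pos h1 (hsupp _ _ h2)
  | succ t =>
    obtain ⟨h1, h2⟩ := pos_pair (hT _ _ _) (hπe _ _) h
    exact mul_pos h1 (hsupp _ _ h2)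

lemma preP_pos (d1 : S → ℝ) (T : S → A → S → ℝ) (πb πe : S → A → ℝ)
    (hd1 : ∀ s, 0 ≤ d1 s) (hT : ∀ s a s', 0 ≤ T s a s')
    (hπb : ∀ s a, 0 ≤ πb s a) (hπe : ∀ s a, 0 ≤ πe s a)
    (hsupp : ∀ s a, 0 < πe s a → 0 < πb s a)
    {m : ℕ} {τ : ℕ → S × A} (h : 0 < preP d1 T πe m τ) : 0 < preP d1 T πb m τ := by
  have h' : 0 < ∏ t ∈ range m, stepW d1 T πe τ t := h
  show 0 < ∏ t ∈ range m, stepW d1 T πb τ t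
  refine Finset.prod_pos fun t ht => ?_
  refine stepW_pos d1 T πb πe hd1 hT hπe hsupp ?_
  have hne := Finset.prod_ne_zero_iff.mp (ne_of_gt h') t ht
  exact lt_of_le_of_ne (stepW_nonneg d1 T πe hd1 hT hπe τ t) (Ne.symm hne)

lemma dSA_nonneg (d1 : S → ℝ) (T : S → A → S → ℝ) (π : S → A → ℝ)
    (hd1 : ∀ s, 0 ≤ d1 s) (hT : ∀ s a s', 0 ≤ T s a s') (hπ : ∀ s a, 0 ≤ π s a)
    (k : ℕ) (s : S) (a : A) : 0 ≤ dSA d1 T π k s a := by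
  refine Finset.sum_nonneg fun σ _ => mul_nonneg (preP_nonneg d1 T π hd1 hT hπ _ _) ?_
  show (0:ℝ) ≤ if extTraj σ k = (s, a) then 1 else 0
  split <;> norm_num

lemma dSA_le_one (d1 : S → ℝ) (T : S → A → S → ℝ) (π : S → A → ℝ)
    (hd1 : ∀ s, 0 ≤ d1 s) (hT : ∀ s a s', 0 ≤ T s a s') (hπ : ∀ s a, 0 ≤ π s a)
    (hd1sum : ∑ s, d1 s = 1) (hTsum : ∀ s a, ∑ s', T s a s' = 1)
    (hπsum : ∀ s, ∑ a, π s a = 1)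
    (k : ℕ) (s : S) (a : A) : dSA d1 T π k s a ≤ 1 := by
  have h1 : dSA d1 T π k s a ≤ expVal d1 T π (k + 1) (fun _ => 1) := by
    refine Finset.sum_le_sum fun σ _ => ?_
    refine mul_le_mul_of_nonneg_left ?_ (preP_nonneg d1 T π hd1 hT hπ _ _)
    show (if extTraj σ k = (s, a) then (1:ℝ) else 0) ≤ 1
    split <;> norm_num
  rw [expVal_one d1 T π hd1sum hTsum hπsum (k + 1)] at h1
  exact h1

lemma dSA_pos (d1 : S → ℝ) (T : S → A → S → ℝ) (πb πe : S → A → ℝ)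
    (hd1 : ∀ s, 0 ≤ d1 s) (hT : ∀ s a s', 0 ≤ T s a s')
    (hπb : ∀ s a, 0 ≤ πb s a) (hπe : ∀ s a, 0 ≤ πe s a)
    (hsupp : ∀ s a, 0 < πe s a → 0 < πb s a)
    {k : ℕ} {s : S} {a : A} (h : 0 < dSA d1 T πe k s a) : 0 < dSA d1 T πb k s a := by
  by_contra hb
  have hb0 : dSA d1 T πb k s a = 0 :=
    le_antisymm (not_lt.mp hb) (dSA_nonneg d1 T πb hd1 hT hπb k s a)
  have hterm := (Finset.sum_eq_zero_iff_of_nonneg fun σ _ =>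
    mul_nonneg (preP_nonneg d1 T πb hd1 hT hπb _ _)
      (by split <;> norm_num : (0:ℝ) ≤ if extTraj σ k = (s, a) then 1 else 0)).mp hb0
  have hzero : dSA d1 T πe k s a = 0 := by
    refine Finset.sum_eq_zero fun σ _ => ?_
    show preP d1 T πe (k + 1) (extTraj σ) * (if extTraj σ k = (s, a) then 1 else 0) = 0
    by_cases hind : extTraj σ k = (s, a)
    · have h1 := hterm σ (Finset.mem_univ σ)
      rw [if_pos hind, mul_one] at h1
      have h2 : preP d1 T πe (k + 1) (extTraj σ) = 0 := by
        by_contra hc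
        have := preP_pos d1 T πb πe hd1 hT hπb hπe hsupp
          (lt_of_le_of_ne (preP_nonneg d1 T πe hd1 hT hπe _ _) (Ne.symm hc))
        exact this.ne' h1
      rw [h2, zero_mul]
    · rw [if_neg hind, mul_zero]
  rw [hzero] at h
  exact lt_irrefl 0 h

lemma summable_geom_bdd {γ : ℝ} (hγ0 : 0 ≤ γ) (hγ1 : γ < 1)
    (u : ℕ → ℝ) (C : ℝ) (hu : ∀ k, |u k| ≤ C) :
    Summable (fun k => γ ^ k * u k) := by
  refine Summable.of_norm_bounded (g := fun k => γ ^ k * C)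
    (Summable.mul_right C (summable_geometric_of_lt_one hγ0 hγ1)) fun k => ?_
  rw [Real.norm_eq_abs, abs_mul, abs_pow, abs_of_nonneg hγ0]
  exact mul_le_mul_of_nonneg_left (hu k) (pow_nonneg hγ0 k)

lemma abs_expVal_le (d1 : S → ℝ) (T : S → A → S → ℝ) (π : S → A → ℝ)
    (hd1 : ∀ s, 0 ≤ d1 s) (hT : ∀ s a s', 0 ≤ T s a s') (hπ : ∀ s a, 0 ≤ π s a)
    (hd1sum : ∑ s, d1 s = 1) (hTsum : ∀ s a, ∑ s', T s a s' = 1)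
    (hπsum : ∀ s, ∑ a, π s a = 1)
    (m : ℕ) (f : (ℕ → S × A) → ℝ) (C : ℝ) (hC : ∀ τ, |f τ| ≤ C) :
    |expVal d1 T π m f| ≤ C := by
  have htot : (∑ σ : Fin m → S × A, preP d1 T π m (extTraj σ)) = 1 := by
    have := expVal_one d1 T π hd1sum hTsum hπsum m
    unfold expVal at this
    simpa using this
  calc |expVal d1 T π m f|
      ≤ ∑ σ : Fin m → S × A, |preP d1 T π m (extTraj σ) * f (extTraj σ)| :=
        Finset.abs_sum_le_sum_abs _ _
    _ ≤ ∑ σ : Fin m → S × A, preP d1 T π m (extTraj σ) * C := by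
        refine Finset.sum_le_sum fun σ _ => ?_
        rw [abs_mul, abs_of_nonneg (preP_nonneg d1 T π hd1 hT hπ _ _)]
        exact mul_le_mul_of_nonneg_left (hC _) (preP_nonneg d1 T π hd1 hT hπ _ _)
    _ = C := by rw [← Finset.sum_mul, htot, one_mul]

-- AUX PART 5
lemma key_cancel (d1 : S → ℝ) (T : S → A → S → ℝ) (πb πe : S → A → ℝ) {γ : ℝ}
    (hd1 : ∀ s, 0 ≤ d1 s) (hT : ∀ s a s', 0 ≤ T s a s')
    (hπb : ∀ s a, 0 ≤ πb s a) (hπe : ∀ s a, 0 ≤ πe s a)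
    (hd1sum : ∑ s, d1 s = 1) (hTsum : ∀ s a, ∑ s', T s a s' = 1)
    (hπbsum : ∀ s, ∑ a, πb s a = 1)
    (hγ0 : 0 ≤ γ) (hγ1 : γ < 1)
    (hsupp : ∀ s a, 0 < πe s a → 0 < πb s a) (s : S) (a : A) :
    (∑' k : ℕ, γ ^ k * dSA d1 T πb k s a) * (dInf d1 T πe γ s a / dInf d1 T πb γ s a)
      = ∑' k : ℕ, γ ^ k * dSA d1 T πe k s a := by
  have h1γ : (1 : ℝ) - γ ≠ 0 := by linarith
  by_cases h : dInf d1 T πb γ s a = 0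
  · rw [h, div_zero, mul_zero]
    have hSb : Summable (fun k => γ ^ k * dSA d1 T πb k s a) :=
      summable_geom_bdd hγ0 hγ1 _ 1 fun k => by
        rw [abs_of_nonneg (dSA_nonneg d1 T πb hd1 hT hπb k s a)]
        exact dSA_le_one d1 T πb hd1 hT hπb hd1sum hTsum hπbsum k s a
    have hSb0 : (∑' k : ℕ, γ ^ k * dSA d1 T πb k s a) = 0 := by
      have hh : (1 - γ) * ∑' k : ℕ, γ ^ k * dSA d1 T πb k s a = 0 := h
      exact (mul_eq_zero.mp hh).resolve_left h1γ
    have hterm : ∀ k, γ ^ k * dSA d1 T πb k s a = 0 := by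
      intro k
      have hle : γ ^ k * dSA d1 T πb k s a ≤ 0 := by
        rw [← hSb0]
        exact Summable.le_tsum hSb k fun j _ => mul_nonneg (pow_nonneg hγ0 j)
          (dSA_nonneg d1 T πb hd1 hT hπb j s a)
      exact le_antisymm hle (mul_nonneg (pow_nonneg hγ0 k)
        (dSA_nonneg d1 T πb hd1 hT hπb k s a))
    symm
    refine (tsum_congr fun k => ?_).trans tsum_zero
    by_cases hp : γ ^ k = 0
    · rw [hp, zero_mul]
    · have hb0 : dSA d1 T πb k s a = 0 := by
        have := hterm k
        rcases mul_eq_zero.mp this with h' | h'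
        · exact absurd h' hp
        · exact h'
      have he0 : dSA d1 T πe k s a = 0 := by
        by_contra hc
        have hpos := dSA_pos d1 T πb πe hd1 hT hπb hπe hsupp
          (lt_of_le_of_ne (dSA_nonneg d1 T πe hd1 hT hπe k s a) (Ne.symm hc))
        rw [hb0] at hpos
        exact lt_irrefl 0 hpos
      rw [he0, mul_zero]
  · have hSb : (∑' k : ℕ, γ ^ k * dSA d1 T πb k s a) ≠ 0 := by
      intro h0
      exact h (by show (1 - γ) * _ = 0; rw [h0, mul_zero])
    have hb : dInf d1 T πb γ s a = (1 - γ) * ∑' k : ℕ, γ ^ k * dSA d1 T πb k s a := rfl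
    have he : dInf d1 T πe γ s a = (1 - γ) * ∑' k : ℕ, γ ^ k * dSA d1 T πe k s a := rfl
    rw [hb, he, mul_div_mul_left _ _ h1γ, mul_comm, div_mul_cancel₀ _ hSb]


/-- SOPE_n identity, infinite horizon: for any finite `n ≥ 0`,
`J(π_e) = E_{τ∼p_πb}[Σ_(t=1)^n γ^(t-1) ρ_(1:t) R_t
  + Σ_(t=n+1)^∞ γ^(t-1) (d^πe(S_(t-n),A_(t-n))/d^πb(S_(t-n),A_(t-n))) ρ_(t-n+1:t) R_t]`
(the tail sum is reindexed by `t = n + 1 + k`, `k ≥ 0`, with 0-indexed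
trajectory coordinates; the expectation of the series is the series of
expectations, as the series converges absolutely in expectation). -/
theorem sope_identity_infinite
    (d1 : S → ℝ) (T : S → A → S → ℝ) (πb πe : S → A → ℝ) (r : S → A → ℝ)
    (γ : ℝ) (n : ℕ)
    (hd1 : ∀ s, 0 ≤ d1 s) (hd1sum : ∑ s, d1 s = 1)
    (hT : ∀ s a s', 0 ≤ T s a s') (hTsum : ∀ s a, ∑ s', T s a s' = 1)
    (hπb : ∀ s a, 0 ≤ πb s a) (hπbsum : ∀ s, ∑ a, πb s a = 1)
    (hπe : ∀ s a, 0 ≤ πe s a) (hπesum : ∀ s, ∑ a, πe s a = 1)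
    (hγ0 : 0 ≤ γ) (hγ1 : γ < 1)
    (hsupp : ∀ s a, 0 < πe s a → 0 < πb s a) :
    Jinf d1 T πe r γ
      = (∑ t ∈ range n, γ ^ t * expVal d1 T πb (t + 1)
            (fun τ => (∏ j ∈ range (t + 1), rho πb πe τ j) * r (τ t).1 (τ t).2))
        + ∑' k : ℕ, γ ^ (k + n) * expVal d1 T πb (k + n + 1)
            (fun τ => (dInf d1 T πe γ (τ k).1 (τ k).2 /
                dInf d1 T πb γ (τ k).1 (τ k).2) *
              (∏ j ∈ Icc (k + 1) (k + n), rho πb πe τ j) *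
              r (τ (k + n)).1 (τ (k + n)).2) := by
  -- uniform bound on rewards
  have hrC : ∀ (s : S) (a : A), |r s a| ≤ ∑ q : S × A, |r q.1 q.2| := fun s a =>
    Finset.single_le_sum (f := fun q : S × A => |r q.1 q.2|)
      (fun q _ => abs_nonneg _) (Finset.mem_univ (s, a))
  have hE : ∀ t : ℕ, |expVal d1 T πe (t + 1) (fun τ => r (τ t).1 (τ t).2)|
      ≤ ∑ q : S × A, |r q.1 q.2| := fun t =>
    abs_expVal_le d1 T πe hd1 hT hπe hd1sum hTsum hπesum _ _ _ fun τ => hrC _ _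
  have hJs : Summable (fun t : ℕ =>
      γ ^ t * expVal d1 T πe (t + 1) (fun τ => r (τ t).1 (τ t).2)) :=
    summable_geom_bdd hγ0 hγ1 _ _ hE
  -- head terms via importance sampling
  have hhead : ∀ t : ℕ, γ ^ t * expVal d1 T πb (t + 1)
      (fun τ => (∏ j ∈ range (t + 1), rho πb πe τ j) * r (τ t).1 (τ t).2)
      = γ ^ t * expVal d1 T πe (t + 1) (fun τ => r (τ t).1 (τ t).2) := fun t =>
    congrArg (fun x => γ ^ t * x)
      (IS_full d1 T πb πe hπe hsupp (t + 1) (fun τ => r (τ t).1 (τ t).2))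
  have hH : (∑ t ∈ range n, γ ^ t * expVal d1 T πb (t + 1)
        (fun τ => (∏ j ∈ range (t + 1), rho πb πe τ j) * r (τ t).1 (τ t).2))
      = ∑ t ∈ range n, γ ^ t * expVal d1 T πe (t + 1) (fun τ => r (τ t).1 (τ t).2) :=
    Finset.sum_congr rfl fun t _ => hhead t
  -- tail terms
  have hdSAb1 : ∀ (q : S × A) (k : ℕ), |dSA d1 T πb k q.1 q.2| ≤ 1 := fun q k => by
    rw [abs_of_nonneg (dSA_nonneg d1 T πb hd1 hT hπb k q.1 q.2)]
    exact dSA_le_one d1 T πb hd1 hT hπb hd1sum hTsum hπbsum k q.1 q.2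
  have hdSAe1 : ∀ (q : S × A) (k : ℕ), |dSA d1 T πe k q.1 q.2| ≤ 1 := fun q k => by
    rw [abs_of_nonneg (dSA_nonneg d1 T πe hd1 hT hπe k q.1 q.2)]
    exact dSA_le_one d1 T πe hd1 hT hπe hd1sum hTsum hπesum k q.1 q.2
  have htail1 : ∀ k : ℕ, expVal d1 T πb (k + n + 1)
      (fun τ => (dInf d1 T πe γ (τ k).1 (τ k).2 /
          dInf d1 T πb γ (τ k).1 (τ k).2) *
        (∏ j ∈ Icc (k + 1) (k + n), rho πb πe τ j) *
        r (τ (k + n)).1 (τ (k + n)).2)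
      = ∑ q : S × A, dSA d1 T πb k q.1 q.2 *
          (dInf d1 T πe γ q.1 q.2 / dInf d1 T πb γ q.1 q.2 * Vit T πe n r q.1 q.2) := fun k =>
    (CIter d1 T πb πe hπe hsupp n k
        (fun τ => dInf d1 T πe γ (τ k).1 (τ k).2 / dInf d1 T πb γ (τ k).1 (τ k).2)
        (fun τ τ' h => by
          show dInf d1 T πe γ (τ k).1 (τ k).2 / dInf d1 T πb γ (τ k).1 (τ k).2
            = dInf d1 T πe γ (τ' k).1 (τ' k).2 / dInf d1 T πb γ (τ' k).1 (τ' k).2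
          rw [h k le_rfl]) r).trans
      (expVal_eval d1 T πb k
        (fun q => dInf d1 T πe γ q.1 q.2 / dInf d1 T πb γ q.1 q.2 * Vit T πe n r q.1 q.2))
  have hsumb : ∀ q : S × A, Summable (fun k : ℕ => γ ^ k * dSA d1 T πb k q.1 q.2 *
      (γ ^ n * (dInf d1 T πe γ q.1 q.2 / dInf d1 T πb γ q.1 q.2 * Vit T πe n r q.1 q.2))) :=
    fun q => (summable_geom_bdd hγ0 hγ1 _ 1 (hdSAb1 q)).mul_right _
  have hsume : ∀ q : S × A, Summable (fun k : ℕ => γ ^ k * dSA d1 T πe k q.1 q.2 *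
      (γ ^ n * Vit T πe n r q.1 q.2)) :=
    fun q => (summable_geom_bdd hγ0 hγ1 _ 1 (hdSAe1 q)).mul_right _
  have hT2 : (∑' k : ℕ, γ ^ (k + n) * expVal d1 T πb (k + n + 1)
        (fun τ => (dInf d1 T πe γ (τ k).1 (τ k).2 /
            dInf d1 T πb γ (τ k).1 (τ k).2) *
          (∏ j ∈ Icc (k + 1) (k + n), rho πb πe τ j) *
          r (τ (k + n)).1 (τ (k + n)).2))
      = ∑' k : ℕ, γ ^ (k + n) *
          expVal d1 T πe (k + n + 1) (fun τ => r (τ (k + n)).1 (τ (k + n)).2) := by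
    calc (∑' k : ℕ, γ ^ (k + n) * expVal d1 T πb (k + n + 1)
          (fun τ => (dInf d1 T πe γ (τ k).1 (τ k).2 /
              dInf d1 T πb γ (τ k).1 (τ k).2) *
            (∏ j ∈ Icc (k + 1) (k + n), rho πb πe τ j) *
            r (τ (k + n)).1 (τ (k + n)).2))
        = ∑' k : ℕ, ∑ q : S × A, γ ^ k * dSA d1 T πb k q.1 q.2 *
            (γ ^ n * (dInf d1 T πe γ q.1 q.2 / dInf d1 T πb γ q.1 q.2 *
              Vit T πe n r q.1 q.2)) := by
          refine tsum_congr fun k => ?_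
          rw [htail1 k, pow_add, Finset.mul_sum]
          exact Finset.sum_congr rfl fun q _ => by ring
      _ = ∑ q : S × A, ∑' k : ℕ, γ ^ k * dSA d1 T πb k q.1 q.2 *
            (γ ^ n * (dInf d1 T πe γ q.1 q.2 / dInf d1 T πb γ q.1 q.2 *
              Vit T πe n r q.1 q.2)) := Summable.tsum_finsetSum fun q _ => hsumb q
      _ = ∑ q : S × A, ∑' k : ℕ, γ ^ k * dSA d1 T πe k q.1 q.2 *
            (γ ^ n * Vit T πe n r q.1 q.2) := by
          refine Finset.sum_congr rfl fun q _ => ?_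
          rw [tsum_mul_right, tsum_mul_right]
          have hkey := key_cancel d1 T πb πe hd1 hT hπb hπe hd1sum hTsum hπbsum
            hγ0 hγ1 hsupp q.1 q.2
          calc (∑' k : ℕ, γ ^ k * dSA d1 T πb k q.1 q.2) *
                (γ ^ n * (dInf d1 T πe γ q.1 q.2 / dInf d1 T πb γ q.1 q.2 *
                  Vit T πe n r q.1 q.2))
              = ((∑' k : ℕ, γ ^ k * dSA d1 T πb k q.1 q.2) *
                  (dInf d1 T πe γ q.1 q.2 / dInf d1 T πb γ q.1 q.2)) *
                (γ ^ n * Vit T πe n r q.1 q.2) := by ring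
            _ = (∑' k : ℕ, γ ^ k * dSA d1 T πe k q.1 q.2) *
                (γ ^ n * Vit T πe n r q.1 q.2) := by rw [hkey]
      _ = ∑' k : ℕ, ∑ q : S × A, γ ^ k * dSA d1 T πe k q.1 q.2 *
            (γ ^ n * Vit T πe n r q.1 q.2) := (Summable.tsum_finsetSum fun q _ => hsume q).symm
      _ = ∑' k : ℕ, γ ^ (k + n) * ∑ q : S × A, dSA d1 T πe k q.1 q.2 *
            Vit T πe n r q.1 q.2 := by
          refine tsum_congr fun k => ?_
          rw [pow_add, Finset.mul_sum]
          exact Finset.sum_congr rfl fun q _ => by ring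
      _ = ∑' k : ℕ, γ ^ (k + n) *
            expVal d1 T πe (k + n + 1) (fun τ => r (τ (k + n)).1 (τ (k + n)).2) := by
          refine tsum_congr fun k => ?_
          refine congrArg (fun x => γ ^ (k + n) * x) ?_
          exact ((expVal_eval d1 T πe k (fun q => Vit T πe n r q.1 q.2)).symm).trans
            (DIter d1 T πe n k r).symm
  calc Jinf d1 T πe r γ
      = (∑ t ∈ range n, γ ^ t * expVal d1 T πe (t + 1) (fun τ => r (τ t).1 (τ t).2))
        + ∑' k : ℕ, γ ^ (k + n) *
            expVal d1 T πe (k + n + 1) (fun τ => r (τ (k + n)).1 (τ (k + n)).2) :=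
        (Summable.sum_add_tsum_nat_add n hJs).symm
    _ = _ := by rw [← hH, ← hT2]
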